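/- Let 1 < p < ∞ and C > 0, let X be a complex Banach space satisfying the p-uniform convexity inequality with constant C, and let ε ∈ [0, 1) satisfy (1+C)^{1/p}(1−ε) > 1. Let 𝒢 = (V, ω) be a connected finite weighted graph with all degrees positive that is bipartite with parts V₁, V₂ (i.e. V = V₁ ∪ V₂ disjointly and ω(s,t) = 0 whenever s, t lie in the same part). Suppose that ‖Af‖_{L^p(V,ν;X)} ≤ ε ‖f‖_{L^p(V,ν;X)} for every f : V → X with ∑_{s∈V₁} ν(s) f(s) = 0 and ∑_{s∈V₂} ν(s) f(s) = 0. Then every such f satisfies ‖f‖_{L^p(V,ν;X)} ≤ (1+C)^{−1/p}(1−ε)^{−1} ‖∇f‖_{L^p(V×V,ℙ;X)}. -/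

import Mathlib

/-!
Apply uniform convexity at each vertex `s` to the neighbours of `s` chosen by the random walk:
their mean is `A f s`, so `‖f s - A f s‖ ^ p + C · 𝔼_t ‖f t - A f s‖ ^ p ≤ 𝔼_t ‖f t - f s‖ ^ p`, and
averaging over `s` bounds `‖f - A f‖_p ^ p + C · ‖f(t) - A f(s)‖_p ^ p` by `‖∇f‖_p ^ p`.
Both endpoints of a random edge are `ν`-distributed, so by Minkowski's inequality each of the two
norms on the left is at least `‖f‖_p - ‖A f‖_p ≥ (1 - ε) ‖f‖_p`, whence
`(1 + C) (1 - ε) ^ p ‖f‖_p ^ p ≤ ‖∇f‖_p ^ p`.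
-/

open scoped BigOperators
open Finset MeasureTheory

noncomputable section

variable {V : Type*}

def wdeg [Fintype V] (ω : V → V → ℝ) (s : V) : ℝ := ∑ t, ω s t

def nu [Fintype V] (ω : V → V → ℝ) (s : V) : ℝ := wdeg ω s / ∑ t, wdeg ω t

def edgeP [Fintype V] (ω : V → V → ℝ) (s t : V) : ℝ := ω s t / ∑ u, ∑ v, ω u v

def SymmW (ω : V → V → ℝ) : Prop := ∀ s t, ω s t = ω t s

def NonnegW (ω : V → V → ℝ) : Prop := ∀ s t, 0 ≤ ω s t

def ConnW (ω : V → V → ℝ) : Prop := (SimpleGraph.fromRel fun s t => 0 < ω s t).Connected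

def lpNormW [Fintype V] (ω : V → V → ℝ) (p : ℝ) {X : Type*} [NormedAddCommGroup X]
    (f : V → X) : ℝ := (∑ s, nu ω s * ‖f s‖ ^ p) ^ (1 / p)

def gradNormW [Fintype V] (ω : V → V → ℝ) (p : ℝ) {X : Type*} [NormedAddCommGroup X]
    (f : V → X) : ℝ := (∑ s, ∑ t, edgeP ω s t * ‖f t - f s‖ ^ p) ^ (1 / p)

def poincareConst [Fintype V] (ω : V → V → ℝ) (p : ℝ) (X : Type*) [NormedAddCommGroup X] : ℝ :=
  sInf {π : ℝ | 0 ≤ π ∧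
    ∀ f : V → X, (⨅ x : X, lpNormW ω p fun s => f s - x) ≤ π * gradNormW ω p f}

def markovW [Fintype V] (ω : V → V → ℝ) {X : Type*} [AddCommGroup X] [Module ℝ X]
    (f : V → X) (s : V) : X := (wdeg ω s)⁻¹ • ∑ t, ω s t • f t

/-- `X` satisfies the p-uniform convexity inequality with constant `C`. -/
def PUC (X : Type*) [NormedAddCommGroup X] [Module ℝ X] (p C : ℝ) : Prop :=
  ∀ (n : ℕ) (μ : Fin n → ℝ), (∀ i, 0 ≤ μ i) → (∑ i, μ i) = 1 →
    ∀ U : Fin n → X,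
      ‖∑ i, μ i • U i‖ ^ p + C * ∑ i, μ i * ‖U i - ∑ j, μ j • U j‖ ^ p ≤ ∑ i, μ i * ‖U i‖ ^ p

section Minkowski

variable {ι : Type*} [Fintype ι] {p : ℝ}

theorem weighted_Lp_add_le (hp : 1 ≤ p) {w F G : ι → ℝ} (hw : ∀ i, 0 ≤ w i)
    (hF : ∀ i, 0 ≤ F i) (hG : ∀ i, 0 ≤ G i) :
    (∑ i, w i * (F i + G i) ^ p) ^ (1 / p) ≤
      (∑ i, w i * F i ^ p) ^ (1 / p) + (∑ i, w i * G i ^ p) ^ (1 / p) := by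
  -- absorb the weight into the function: `w * H ^ p = (w ^ (1 / p) * H) ^ p`
  have absorb : ∀ H : ι → ℝ, (∀ i, 0 ≤ H i) →
      ∑ i, w i * H i ^ p = ∑ i, (w i ^ (1 / p) * H i) ^ p := fun H hH =>
    Finset.sum_congr rfl fun i _ => by
      rw [Real.mul_rpow (Real.rpow_nonneg (hw i) _) (hH i), ← Real.rpow_mul (hw i),
        one_div_mul_cancel (by positivity), Real.rpow_one]
  rw [absorb _ fun i => add_nonneg (hF i) (hG i), absorb F hF, absorb G hG]
  simp only [mul_add]
  exact Real.Lp_add_le_of_nonneg _ hp (fun i _ => mul_nonneg (Real.rpow_nonneg (hw i) _) (hF i))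
    (fun i _ => mul_nonneg (Real.rpow_nonneg (hw i) _) (hG i))

theorem weighted_Lp_norm_le_sub_add {X : Type*} [NormedAddCommGroup X] (hp : 1 ≤ p)
    {w : ι → ℝ} (hw : ∀ i, 0 ≤ w i) (a b : ι → X) :
    (∑ i, w i * ‖a i‖ ^ p) ^ (1 / p) ≤
      (∑ i, w i * ‖a i - b i‖ ^ p) ^ (1 / p) + (∑ i, w i * ‖b i‖ ^ p) ^ (1 / p) := by
  have hpoint : ∑ i, w i * ‖a i‖ ^ p ≤ ∑ i, w i * (‖a i - b i‖ + ‖b i‖) ^ p :=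
    Finset.sum_le_sum fun i _ => mul_le_mul_of_nonneg_left
      (Real.rpow_le_rpow (norm_nonneg _) (norm_le_norm_sub_add _ _) (by linarith)) (hw i)
  calc (∑ i, w i * ‖a i‖ ^ p) ^ (1 / p)
      ≤ (∑ i, w i * (‖a i - b i‖ + ‖b i‖) ^ p) ^ (1 / p) :=
        Real.rpow_le_rpow (Finset.sum_nonneg fun i _ => by have := hw i; positivity) hpoint
          (by positivity)
    _ ≤ _ := weighted_Lp_add_le hp hw (fun _ => norm_nonneg _) (fun _ => norm_nonneg _)

end Minkowski

theorem PUC.sum_le {X : Type*} [NormedAddCommGroup X] [Module ℝ X] {p C : ℝ} (hX : PUC X p C)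
    {ι : Type*} [Fintype ι] {μ : ι → ℝ} (hμ₀ : ∀ i, 0 ≤ μ i) (hμ₁ : ∑ i, μ i = 1) (U : ι → X) :
    ‖∑ i, μ i • U i‖ ^ p + C * ∑ i, μ i * ‖U i - ∑ j, μ j • U j‖ ^ p ≤
      ∑ i, μ i * ‖U i‖ ^ p := by
  let e := (Fintype.equivFin ι).symm
  have h := hX _ (μ ∘ e) (fun k => hμ₀ _) ((Equiv.sum_comp e μ).trans hμ₁) (U ∘ e)
  simp only [Function.comp_apply] at h
  simpa only [Equiv.sum_comp e (fun i => μ i • U i),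
    Equiv.sum_comp e (fun i => μ i * ‖U i - ∑ j, μ j • U j‖ ^ p),
    Equiv.sum_comp e (fun i => μ i * ‖U i‖ ^ p)] using h

theorem PUC.norm_sub_sum_le {X : Type*} [NormedAddCommGroup X] [Module ℝ X] {p C : ℝ}
    (hX : PUC X p C) {ι : Type*} [Fintype ι] {μ : ι → ℝ} (hμ₀ : ∀ i, 0 ≤ μ i)
    (hμ₁ : ∑ i, μ i = 1) (x : X) (y : ι → X) :
    ‖x - ∑ i, μ i • y i‖ ^ p + C * ∑ i, μ i * ‖y i - ∑ j, μ j • y j‖ ^ p ≤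
      ∑ i, μ i * ‖y i - x‖ ^ p := by
  have hmean : ∑ i, μ i • (y i - x) = ∑ i, μ i • y i - x := by
    simp only [smul_sub, Finset.sum_sub_distrib, ← Finset.sum_smul, hμ₁, one_smul]
  have h := hX.sum_le hμ₀ hμ₁ fun i => y i - x
  simp only [hmean, sub_sub_sub_cancel_right] at h
  rwa [norm_sub_rev]

section Graph

variable [Fintype V] {ω : V → V → ℝ}

theorem wdeg_nonneg (hnn : NonnegW ω) (s : V) : 0 ≤ wdeg ω s :=
  Finset.sum_nonneg fun t _ => hnn s t

theorem nu_nonneg (hnn : NonnegW ω) (s : V) : 0 ≤ nu ω s :=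
  div_nonneg (wdeg_nonneg hnn s) (Finset.sum_nonneg fun t _ => wdeg_nonneg hnn t)

theorem edgeP_nonneg (hnn : NonnegW ω) (s t : V) : 0 ≤ edgeP ω s t :=
  div_nonneg (hnn s t) (Finset.sum_nonneg fun u _ => wdeg_nonneg hnn u)

theorem edgeP_eq_nu_mul {s : V} (hs : wdeg ω s ≠ 0) (t : V) :
    edgeP ω s t = nu ω s * (ω s t / wdeg ω s) := by
  change ω s t / ∑ u, wdeg ω u = wdeg ω s / (∑ u, wdeg ω u) * (ω s t / wdeg ω s)
  rw [div_mul_div_comm, mul_comm _ (wdeg ω s), mul_div_mul_left _ _ hs]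

theorem sum_edgeP_right (s : V) : ∑ t, edgeP ω s t = nu ω s := by
  simp only [edgeP, nu, wdeg, Finset.sum_div]

theorem sum_edgeP_left (hsym : SymmW ω) (t : V) : ∑ s, edgeP ω s t = nu ω t := by
  simp only [edgeP, hsym _ t]
  exact sum_edgeP_right t

theorem markovW_eq_sum {X : Type*} [AddCommGroup X] [Module ℝ X] (f : V → X) (s : V) :
    markovW ω f s = ∑ t, (ω s t / wdeg ω s) • f t := by
  simp only [markovW, Finset.smul_sum, smul_smul, div_eq_inv_mul]

theorem lpNormW_nonneg {X : Type*} [NormedAddCommGroup X] {p : ℝ} (hnn : NonnegW ω)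
    (f : V → X) : 0 ≤ lpNormW ω p f :=
  Real.rpow_nonneg (Finset.sum_nonneg fun s _ => by have := nu_nonneg hnn s; positivity) _

theorem lpNormW_le_sub_add {X : Type*} [NormedAddCommGroup X] {p : ℝ} (hp : 1 ≤ p)
    (hnn : NonnegW ω) (f g : V → X) :
    lpNormW ω p f ≤ lpNormW ω p (f - g) + lpNormW ω p g :=
  weighted_Lp_norm_le_sub_add hp (nu_nonneg hnn) f g

/-- Both endpoints of an `edgeP`-random edge are `nu`-distributed, so Minkowski's inequality on
edges compares `f` at the head with `markovW ω f` at the tail. -/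
theorem lpNormW_le_edge_sub_markovW {X : Type*} [NormedAddCommGroup X] [Module ℝ X] {p : ℝ}
    (hp : 1 ≤ p) (hsym : SymmW ω) (hnn : NonnegW ω) (f : V → X) :
    lpNormW ω p f ≤ (∑ s, ∑ t, edgeP ω s t * ‖f t - markovW ω f s‖ ^ p) ^ (1 / p) +
      lpNormW ω p (markovW ω f) := by
  have h := weighted_Lp_norm_le_sub_add hp (fun q : V × V => edgeP_nonneg hnn q.1 q.2)
    (fun q => f q.2) (fun q => markovW ω f q.1)
  have head : ∑ s, ∑ t, edgeP ω s t * ‖f t‖ ^ p = ∑ t, nu ω t * ‖f t‖ ^ p := by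
    rw [Finset.sum_comm]
    simp only [← Finset.sum_mul, sum_edgeP_left hsym]
  have tail : ∑ s, ∑ t, edgeP ω s t * ‖markovW ω f s‖ ^ p =
      ∑ s, nu ω s * ‖markovW ω f s‖ ^ p := by
    simp only [← Finset.sum_mul, sum_edgeP_right]
  simp only [Fintype.sum_prod_type] at h
  rwa [head, tail] at h

variable {X : Type*} [NormedAddCommGroup X] [Module ℝ X] {p C : ℝ}

theorem PUC.norm_sub_markovW_pow_add_le (hX : PUC X p C) (hnn : NonnegW ω) {s : V}
    (hs : 0 < wdeg ω s) (f : V → X) :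
    ‖f s - markovW ω f s‖ ^ p + C * ∑ t, ω s t / wdeg ω s * ‖f t - markovW ω f s‖ ^ p ≤
      ∑ t, ω s t / wdeg ω s * ‖f t - f s‖ ^ p := by
  have hμ₁ : ∑ t, ω s t / wdeg ω s = 1 := by rw [← Finset.sum_div]; exact div_self hs.ne'
  rw [markovW_eq_sum]
  exact hX.norm_sub_sum_le (fun t => div_nonneg (hnn s t) hs.le) hμ₁ (f s) f

theorem PUC.sum_nu_add_sum_edgeP_le (hX : PUC X p C) (hnn : NonnegW ω)
    (hdeg : ∀ s, 0 < wdeg ω s) (f : V → X) :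
    ∑ s, nu ω s * ‖f s - markovW ω f s‖ ^ p +
        C * ∑ s, ∑ t, edgeP ω s t * ‖f t - markovW ω f s‖ ^ p ≤
      ∑ s, ∑ t, edgeP ω s t * ‖f t - f s‖ ^ p := by
  simp only [edgeP_eq_nu_mul (hdeg _).ne', mul_assoc, ← Finset.mul_sum]
  rw [Finset.mul_sum, ← Finset.sum_add_distrib]
  refine Finset.sum_le_sum fun s _ => ?_
  calc _ = nu ω s * (‖f s - markovW ω f s‖ ^ p +
          C * ∑ t, ω s t / wdeg ω s * ‖f t - markovW ω f s‖ ^ p) := by ring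
    _ ≤ _ := mul_le_mul_of_nonneg_left (hX.norm_sub_markovW_pow_add_le hnn (hdeg s) f)
        (nu_nonneg hnn s)

end Graph

theorem one_add_rpow_mul_le_rpow {p C x a b G : ℝ} (hp : 0 < p) (hC : 0 ≤ C) (hx : 0 ≤ x)
    (ha : 0 ≤ a) (hb : 0 ≤ b) (hxa : x ≤ a ^ (1 / p)) (hxb : x ≤ b ^ (1 / p))
    (hG : a + C * b ≤ G) :
    (1 + C) ^ (1 / p) * x ≤ G ^ (1 / p) := by
  rw [one_div] at *
  have hC' : 0 ≤ 1 + C := by linarith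
  rw [Real.le_rpow_inv_iff_of_pos hx ha hp] at hxa
  rw [Real.le_rpow_inv_iff_of_pos hx hb hp] at hxb
  rw [Real.le_rpow_inv_iff_of_pos (by positivity) (by nlinarith) hp, Real.mul_rpow (by positivity) hx,
    ← Real.rpow_mul hC', inv_mul_cancel₀ hp.ne', Real.rpow_one]
  nlinarith

theorem stmt11_general (p C : ℝ) (hp : 1 < p) (hC : 0 < C)
    (X : Type*) [NormedAddCommGroup X] [NormedSpace ℂ X]
    (hX : PUC X p C)
    (ε : ℝ) (hε1 : ε < 1)
    {V : Type*} [Fintype V] [DecidableEq V]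
    (ω : V → V → ℝ) (hsym : SymmW ω) (hnn : NonnegW ω)
    (hdeg : ∀ s, 0 < wdeg ω s)
    (V₁ : Finset V)
    (hA : ∀ f : V → X, (∑ s ∈ V₁, nu ω s • f s) = 0 → (∑ s ∈ V₁ᶜ, nu ω s • f s) = 0 →
      lpNormW ω p (markovW ω f) ≤ ε * lpNormW ω p f) :
    ∀ f : V → X, (∑ s ∈ V₁, nu ω s • f s) = 0 → (∑ s ∈ V₁ᶜ, nu ω s • f s) = 0 →
      lpNormW ω p f ≤ (1 + C) ^ (-(1 / p)) * (1 - ε)⁻¹ * gradNormW ω p f := by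
  intro f hf₁ hf₂
  have hM := hA f hf₁ hf₂
  have hε : 0 < 1 - ε := by linarith
  have hL := lpNormW_nonneg (p := p) hnn f
  have h₁ := lpNormW_le_sub_add hp.le hnn f (markovW ω f)
  have h₂ := lpNormW_le_edge_sub_markovW hp.le hsym hnn f
  have hpow := one_add_rpow_mul_le_rpow (by linarith) hC.le (by positivity)
    (Finset.sum_nonneg fun s _ => by have := nu_nonneg hnn s; positivity)
    (Finset.sum_nonneg fun s _ => Finset.sum_nonneg fun t _ => by
      have := edgeP_nonneg hnn s t; positivity)
    (show (1 - ε) * lpNormW ω p f ≤ lpNormW ω p (f - markovW ω f) by linarith)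
    (show (1 - ε) * lpNormW ω p f ≤ _ by linarith)
    (hX.sum_nu_add_sum_edgeP_le hnn hdeg f)
  have hC' : 0 < (1 + C) ^ (1 / p) := Real.rpow_pos_of_pos (by linarith) _
  rw [Real.rpow_neg (by linarith), ← mul_inv, le_inv_mul_iff₀ (by positivity), mul_assoc]
  exact hpow

/-- bipartite variant. If `𝒢` is bipartite with parts `V₁, V₁ᶜ` and
`‖Af‖_p ≤ ε‖f‖_p` for all `f` with zero mean on each part, then every such `f` satisfies
`‖f‖_p ≤ (1+C)^{−1/p}(1−ε)^{−1} ‖∇f‖_p`. -/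
theorem stmt11 (p C : ℝ) (hp : 1 < p) (hC : 0 < C)
    (X : Type*) [NormedAddCommGroup X] [NormedSpace ℂ X] [CompleteSpace X]
    (hX : PUC X p C)
    (ε : ℝ) (hε0 : 0 ≤ ε) (hε1 : ε < 1)
    (hcond : 1 < (1 + C) ^ (1 / p) * (1 - ε))
    {V : Type*} [Fintype V] [DecidableEq V]
    (ω : V → V → ℝ) (hsym : SymmW ω) (hnn : NonnegW ω) (hconn : ConnW ω)
    (hdeg : ∀ s, 0 < wdeg ω s)
    (V₁ : Finset V)
    (hbip : ∀ s t, 0 < ω s t → ((s ∈ V₁ ∧ t ∉ V₁) ∨ (s ∉ V₁ ∧ t ∈ V₁)))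
    (hA : ∀ f : V → X, (∑ s ∈ V₁, nu ω s • f s) = 0 → (∑ s ∈ V₁ᶜ, nu ω s • f s) = 0 →
      lpNormW ω p (markovW ω f) ≤ ε * lpNormW ω p f) :
    ∀ f : V → X, (∑ s ∈ V₁, nu ω s • f s) = 0 → (∑ s ∈ V₁ᶜ, nu ω s • f s) = 0 →
      lpNormW ω p f ≤ (1 + C) ^ (-(1 / p)) * (1 - ε)⁻¹ * gradNormW ω p f :=
  stmt11_general p C hp hC X hX ε hε1 ω hsym hnn hdeg V₁ hA
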